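/- Let Φ(x¹,x²) = log( cosh x¹ + cosh x² ) on ℝ². Then Hess Φ is positive definite at every point of ℝ², and Φ satisfies the WDVV equations: Σ_{p,q} Φ^{pq} Φ_{jlp} Φ_{ikq} = Σ_{p,q} Φ^{pq} Φ_{ilp} Φ_{jkq} for all indices i,j,k,l ∈ {1,2} at every point; equivalently, Σ_{p,q} Φ^{pq} ( Φ_{11p} Φ_{22q} − Φ_{12p} Φ_{12q} ) = 0 everywhere, so the Hessian metric Hess Φ on ℝ² is Riemannian-flat and Φ defines a Frobenius structure on ℝ². -/

import Mathlib

open Real Matrix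

/-- Partial derivative of `f : ℝⁿ → ℝ` in the `i`-th coordinate direction. -/
noncomputable def pd {n : ℕ} (i : Fin n) (f : (Fin n → ℝ) → ℝ) : (Fin n → ℝ) → ℝ :=
  fun x => fderiv ℝ f x (Pi.single i 1)

/-- Hessian matrix of second partial derivatives of `f : ℝⁿ → ℝ`. -/
noncomputable def hessian {n : ℕ} (f : (Fin n → ℝ) → ℝ) (x : Fin n → ℝ) :
    Matrix (Fin n) (Fin n) ℝ :=
  Matrix.of fun i j => pd i (pd j f) x

/-- Third partial derivatives `Φ_{ijk}` of `f : ℝⁿ → ℝ`. -/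
noncomputable def pd3 {n : ℕ} (f : (Fin n → ℝ) → ℝ) (i j k : Fin n) (x : Fin n → ℝ) : ℝ :=
  pd i (pd j (pd k f)) x

/-- The potential `Φ(x¹,x²) = log(cosh x¹ + cosh x²)` on `ℝ²`. -/
noncomputable def ΦCosh (x : Fin 2 → ℝ) : ℝ :=
  Real.log (Real.cosh (x 0) + Real.cosh (x 1))

/-! In the coordinates `u, v = (x₀ ± x₁) / 2` the potential separates,
`Φ = log 2 + log cosh u + log cosh v`. Hence `Φᵢⱼ` depends only on `i + j` and `Φᵢⱼₖ` only on
`i + j + k` in `ℤ/2`, and so does the inverse Hessian. For such tensors, reindexing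
`p ↦ p + a`, `q ↦ q + b` shows that `∑ Φ^{pq} Φ_{a p} Φ_{b q}` depends only on `a + b`, and both
sides of WDVV have index sum `i + j + k + l`. The Hessian is
`(sech² u (e₀ + e₁)^{⊗2} + sech² v (e₀ - e₁)^{⊗2}) / 4`, which is positive definite. -/

section Ridge

variable {n : ℕ} {ℓ₁ ℓ₂ : (Fin n → ℝ) →L[ℝ] ℝ} {F G : ℝ → ℝ} {a b : ℝ}

lemma pd_const_add (i : Fin n) (c : ℝ) (f : (Fin n → ℝ) → ℝ) :
    pd i (fun x => c + f x) = pd i f := by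
  funext x
  simp only [pd, fderiv_const_add]

def ridgePair (ℓ₁ ℓ₂ : (Fin n → ℝ) →L[ℝ] ℝ) (F G : ℝ → ℝ) (a b : ℝ) (x : Fin n → ℝ) : ℝ :=
  a * F (ℓ₁ x) + b * G (ℓ₂ x)

lemma pd_ridgePair (hF : Differentiable ℝ F) (hG : Differentiable ℝ G) (i : Fin n) :
    pd i (ridgePair ℓ₁ ℓ₂ F G a b) =
      ridgePair ℓ₁ ℓ₂ (deriv F) (deriv G) (a * ℓ₁ (Pi.single i 1)) (b * ℓ₂ (Pi.single i 1)) := by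
  funext x
  have hF' := (hF (ℓ₁ x)).hasDerivAt.comp_hasFDerivAt x ℓ₁.hasFDerivAt
  have hG' := (hG (ℓ₂ x)).hasDerivAt.comp_hasFDerivAt x ℓ₂.hasFDerivAt
  have hsum : HasFDerivAt (ridgePair ℓ₁ ℓ₂ F G a b)
      (a • deriv F (ℓ₁ x) • ℓ₁ + b • deriv G (ℓ₂ x) • ℓ₂) x :=
    (hF'.const_mul a).add (hG'.const_mul b)
  rw [pd, hsum.fderiv]
  simp only [ridgePair, _root_.add_apply, _root_.smul_apply, smul_eq_mul]
  ring

lemma pd_ridgePair_iteratedDeriv {N : WithTop ℕ∞} {m : ℕ} (hF : ContDiff ℝ N F)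
    (hG : ContDiff ℝ N G) (hm : m < N) (i : Fin n) :
    pd i (ridgePair ℓ₁ ℓ₂ (iteratedDeriv m F) (iteratedDeriv m G) a b) =
      ridgePair ℓ₁ ℓ₂ (iteratedDeriv (m + 1) F) (iteratedDeriv (m + 1) G)
        (a * ℓ₁ (Pi.single i 1)) (b * ℓ₂ (Pi.single i 1)) := by
  rw [iteratedDeriv_succ, iteratedDeriv_succ]
  exact pd_ridgePair (hF.differentiable_iteratedDeriv m hm) (hG.differentiable_iteratedDeriv m hm) i

lemma ridgePair_eq_iteratedDeriv_zero :
    ridgePair ℓ₁ ℓ₂ F G a b = ridgePair ℓ₁ ℓ₂ (iteratedDeriv 0 F) (iteratedDeriv 0 G) a b := by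
  simp only [iteratedDeriv_zero]

lemma hessian_ridgePair (hF : ContDiff ℝ 2 F) (hG : ContDiff ℝ 2 G) (x : Fin n → ℝ) :
    hessian (ridgePair ℓ₁ ℓ₂ F G 1 1) x = of fun i j =>
      ℓ₁ (Pi.single i 1) * ℓ₁ (Pi.single j 1) * iteratedDeriv 2 F (ℓ₁ x) +
        ℓ₂ (Pi.single i 1) * ℓ₂ (Pi.single j 1) * iteratedDeriv 2 G (ℓ₂ x) := by
  ext i j
  rw [hessian, of_apply, of_apply, ridgePair_eq_iteratedDeriv_zero,
    pd_ridgePair_iteratedDeriv hF hG (by norm_num), pd_ridgePair_iteratedDeriv hF hG (by norm_num)]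
  simp only [ridgePair]
  ring

lemma pd3_ridgePair (hF : ContDiff ℝ 3 F) (hG : ContDiff ℝ 3 G) (i j k : Fin n) (x : Fin n → ℝ) :
    pd3 (ridgePair ℓ₁ ℓ₂ F G 1 1) i j k x =
      ℓ₁ (Pi.single i 1) * ℓ₁ (Pi.single j 1) * ℓ₁ (Pi.single k 1) * iteratedDeriv 3 F (ℓ₁ x) +
        ℓ₂ (Pi.single i 1) * ℓ₂ (Pi.single j 1) * ℓ₂ (Pi.single k 1) *
          iteratedDeriv 3 G (ℓ₂ x) := by
  rw [pd3, ridgePair_eq_iteratedDeriv_zero, pd_ridgePair_iteratedDeriv hF hG (by norm_num),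
    pd_ridgePair_iteratedDeriv hF hG (by norm_num), pd_ridgePair_iteratedDeriv hF hG (by norm_num)]
  simp only [ridgePair]
  ring

end Ridge

lemma sum_sum_mul_add_eq {A R : Type*} [AddCommGroup A] [Fintype A] [CommSemiring R]
    (g τ : A → R) {a b c d : A} (h : a + b = c + d) :
    ∑ p, ∑ q, g (p + q) * τ (a + p) * τ (b + q) = ∑ p, ∑ q, g (p + q) * τ (c + p) * τ (d + q) := by
  have key : ∀ a b : A, ∑ p, ∑ q, g (p + q - (a + b)) * τ p * τ q =
      ∑ p, ∑ q, g (p + q) * τ (a + p) * τ (b + q) := by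
    intro a b
    rw [← Equiv.sum_comp (Equiv.addLeft a)]
    refine Fintype.sum_congr _ _ fun p => ?_
    rw [← Equiv.sum_comp (Equiv.addLeft b)]
    refine Fintype.sum_congr _ _ fun q => ?_
    simp only [Equiv.coe_addLeft]
    rw [show a + p + (b + q) - (a + b) = p + q by abel]
  rw [← key, ← key, h]

section FinTwo

def signChar : Fin 2 → ℝ := ![1, -1]

lemma signChar_add (i j : Fin 2) : signChar (i + j) = signChar i * signChar j := by
  fin_cases i <;> fin_cases j <;> norm_num [signChar, show (1 + 1 : Fin 2) = 0 from rfl]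

noncomputable def halfSum : (Fin 2 → ℝ) →L[ℝ] ℝ := (2⁻¹ : ℝ) • (.proj 0 + .proj 1)

noncomputable def halfDiff : (Fin 2 → ℝ) →L[ℝ] ℝ := (2⁻¹ : ℝ) • (.proj 0 - .proj 1)

lemma halfSum_single (i : Fin 2) : halfSum (Pi.single i 1) = 2⁻¹ := by
  fin_cases i <;> simp [halfSum]

lemma halfDiff_single (i : Fin 2) : halfDiff (Pi.single i 1) = 2⁻¹ * signChar i := by
  fin_cases i <;> simp [halfDiff, signChar]

variable {F G : ℝ → ℝ}

lemma hessian_ridgePair_halfSum_halfDiff (hF : ContDiff ℝ 2 F) (hG : ContDiff ℝ 2 G)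
    (x : Fin 2 → ℝ) :
    hessian (ridgePair halfSum halfDiff F G 1 1) x = of fun i j =>
      (iteratedDeriv 2 F (halfSum x) + signChar (i + j) * iteratedDeriv 2 G (halfDiff x)) / 4 := by
  rw [hessian_ridgePair hF hG]
  ext i j
  simp only [of_apply, halfSum_single, halfDiff_single, signChar_add]
  ring

lemma pd3_ridgePair_halfSum_halfDiff (hF : ContDiff ℝ 3 F) (hG : ContDiff ℝ 3 G)
    (i j k : Fin 2) (x : Fin 2 → ℝ) :
    pd3 (ridgePair halfSum halfDiff F G 1 1) i j k x =
      (iteratedDeriv 3 F (halfSum x) + signChar (i + j + k) * iteratedDeriv 3 G (halfDiff x)) /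
        8 := by
  rw [pd3_ridgePair hF hG]
  simp only [halfSum_single, halfDiff_single, signChar_add]
  ring

lemma posDef_of_signChar {α β : ℝ} (hα : 0 < α) (hβ : 0 < β) :
    (of fun i j : Fin 2 => (α + signChar (i + j) * β) / 4).PosDef := by
  rw [posDef_iff_dotProduct_mulVec]
  refine ⟨?_, fun w hw => ?_⟩
  · ext i j
    simp [add_comm i j]
  · have hw' : w 0 + w 1 ≠ 0 ∨ w 0 - w 1 ≠ 0 := by
      by_contra! h
      refine hw (funext fun i => ?_)
      fin_cases i <;> simp only [Fin.zero_eta, Fin.mk_one, Fin.isValue, Pi.zero_apply] <;>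
        linarith [h.1, h.2]
    have hform : star w ⬝ᵥ (of (fun i j : Fin 2 => (α + signChar (i + j) * β) / 4) *ᵥ w) =
        (α * (w 0 + w 1) ^ 2 + β * (w 0 - w 1) ^ 2) / 4 := by
      simp only [dotProduct, mulVec, Fin.sum_univ_two, signChar, of_apply, Pi.star_apply,
        star_trivial, Fin.isValue, Fin.reduceAdd, cons_val_zero, cons_val_one, cons_val_fin_one]
      ring
    rw [hform]
    rcases hw' with h | h
    · nlinarith [mul_pos hα (sq_pos_of_ne_zero h), mul_nonneg hβ.le (sq_nonneg (w 0 - w 1))]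
    · nlinarith [mul_pos hβ (sq_pos_of_ne_zero h), mul_nonneg hα.le (sq_nonneg (w 0 + w 1))]

lemma exists_inv_eq_of_add {K : Type*} [Field K] (h : Fin 2 → K) :
    ∃ g : Fin 2 → K, (of fun i j => h (i + j))⁻¹ = of fun i j => g (i + j) := by
  refine ⟨fun s => Ring.inverse (of fun i j => h (i + j)).det * ![h 0, -h 1] s, ?_⟩
  rw [inv_def, adjugate_fin_two]
  ext i j
  fin_cases i <;> fin_cases j <;> simp

end FinTwo

lemma contDiff_log_cosh {N : WithTop ℕ∞} : ContDiff ℝ N fun t => log (cosh t) :=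
  contDiff_cosh.log fun t => (cosh_pos t).ne'

lemma iteratedDeriv_two_log_cosh (t : ℝ) :
    iteratedDeriv 2 (fun t => log (cosh t)) t = (cosh t ^ 2)⁻¹ := by
  have hlog : deriv (fun t => log (cosh t)) = fun t => sinh t / cosh t :=
    funext fun t => ((hasDerivAt_cosh t).log (cosh_pos t).ne').deriv
  have htanh : HasDerivAt (fun t => sinh t / cosh t)
      ((cosh t * cosh t - sinh t * sinh t) / cosh t ^ 2) t :=
    (hasDerivAt_sinh t).div (hasDerivAt_cosh t) (cosh_pos t).ne'
  rw [← one_div, ← cosh_sq_sub_sinh_sq t, iteratedDeriv_succ, iteratedDeriv_one, hlog, htanh.deriv]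
  ring

lemma ΦCosh_eq :
    ΦCosh = fun x => log 2 +
      ridgePair halfSum halfDiff (fun t => log (cosh t)) (fun t => log (cosh t)) 1 1 x := by
  funext x
  have hu : halfSum x = 2⁻¹ * (x 0 + x 1) := rfl
  have hv : halfDiff x = 2⁻¹ * (x 0 - x 1) := rfl
  have hcosh : cosh (x 0) + cosh (x 1) = 2 * cosh (halfSum x) * cosh (halfDiff x) := by
    rw [show x 0 = halfSum x + halfDiff x by rw [hu, hv]; ring,
      show x 1 = halfSum x - halfDiff x by rw [hu, hv]; ring, cosh_add, cosh_sub]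
    ring
  rw [ΦCosh, hcosh, log_mul (by positivity) (cosh_pos _).ne',
    log_mul two_ne_zero (cosh_pos _).ne']
  simp only [ridgePair]
  ring

lemma hessian_ΦCosh (x : Fin 2 → ℝ) :
    hessian ΦCosh x = of fun i j =>
      ((cosh (halfSum x) ^ 2)⁻¹ + signChar (i + j) * (cosh (halfDiff x) ^ 2)⁻¹) / 4 := by
  simp only [hessian, ΦCosh_eq, pd_const_add]
  rw [← hessian, hessian_ridgePair_halfSum_halfDiff contDiff_log_cosh contDiff_log_cosh,
    iteratedDeriv_two_log_cosh, iteratedDeriv_two_log_cosh]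

lemma posDef_hessian_ΦCosh (x : Fin 2 → ℝ) : (hessian ΦCosh x).PosDef := by
  rw [hessian_ΦCosh]
  exact posDef_of_signChar (by positivity) (by positivity)

lemma exists_inv_hessian_ΦCosh_eq_add (x : Fin 2 → ℝ) :
    ∃ g : Fin 2 → ℝ, (hessian ΦCosh x)⁻¹ = of fun p q => g (p + q) := by
  rw [hessian_ΦCosh]
  exact exists_inv_eq_of_add fun s =>
    ((cosh (halfSum x) ^ 2)⁻¹ + signChar s * (cosh (halfDiff x) ^ 2)⁻¹) / 4

lemma exists_pd3_ΦCosh_eq_add (x : Fin 2 → ℝ) :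
    ∃ τ : Fin 2 → ℝ, ∀ i j k, pd3 ΦCosh i j k x = τ (i + j + k) := by
  refine ⟨fun s => (iteratedDeriv 3 (fun t => log (cosh t)) (halfSum x) +
    signChar s * iteratedDeriv 3 (fun t => log (cosh t)) (halfDiff x)) / 8, fun i j k => ?_⟩
  simp only [pd3, ΦCosh_eq, pd_const_add]
  exact pd3_ridgePair_halfSum_halfDiff contDiff_log_cosh contDiff_log_cosh i j k x

/-- `Φ = log(cosh x¹ + cosh x²)` has positive definite Hessian everywhere and
satisfies the WDVV equations (equivalently, the single two-dimensional WDVV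
equation); hence its Hessian metric on `ℝ²` is flat and `Φ` defines a Frobenius
structure. -/
theorem wdvv_cosh_potential (x : Fin 2 → ℝ) :
    (hessian ΦCosh x).PosDef ∧
    (∀ i j k l : Fin 2,
      ∑ p : Fin 2, ∑ q : Fin 2,
        (hessian ΦCosh x)⁻¹ p q * pd3 ΦCosh j l p x * pd3 ΦCosh i k q x =
      ∑ p : Fin 2, ∑ q : Fin 2,
        (hessian ΦCosh x)⁻¹ p q * pd3 ΦCosh i l p x * pd3 ΦCosh j k q x) ∧
    (∑ p : Fin 2, ∑ q : Fin 2,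
      (hessian ΦCosh x)⁻¹ p q *
        (pd3 ΦCosh 0 0 p x * pd3 ΦCosh 1 1 q x -
          pd3 ΦCosh 0 1 p x * pd3 ΦCosh 0 1 q x) = 0) := by
  obtain ⟨g, hg⟩ := exists_inv_hessian_ΦCosh_eq_add x
  obtain ⟨τ, hτ⟩ := exists_pd3_ΦCosh_eq_add x
  refine ⟨posDef_hessian_ΦCosh x, fun i j k l => ?_, ?_⟩
  · simp only [hg, hτ, of_apply]
    exact sum_sum_mul_add_eq g τ (by abel)
  · simp only [hg, hτ, of_apply, mul_sub, ← mul_assoc, Finset.sum_sub_distrib, sub_eq_zero]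
    exact sum_sum_mul_add_eq g τ rfl
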